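/- Consider a streaming least-squares setup satisfying the stability hypotheses with parameters κ, δ, θ, λ, where δ ∈ [0,1) and 0 ≤ θ < (1−δ)/2, set ε = (1+δ)/2 − √((1−δ)²/4 − θ²), and suppose M_y = κ^{−1/2}·sup_{k≥0} ‖(y_k, y_{k+1})‖₂ is finite. Then for all k ≥ 0: (i) ‖α_{k|k}‖₂ ≤ λ^{−1}·(1 + θ/(1−ε−θ))·√(1+δ)·M_y, and (ii) ‖α_{k|k+1}‖₂ ≤ ((1 + λ^{−1}θ)/(1−ε−θ))·√(1+δ)·M_y. -/

import Mathlib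

open Matrix

/-- Euclidean (ℓ²) norm of a vector in ℝ^n. -/
noncomputable def vecNorm {n : Type*} [Fintype n] (v : n → ℝ) : ℝ :=
  Real.sqrt (∑ i, v i ^ 2)

/-- Spectral norm (largest singular value) of a real matrix, defined as the operator
norm: the supremum of `‖A x‖₂` over unit vectors `x`. -/
noncomputable def matSpectralNorm {m n : Type*} [Fintype m] [Fintype n]
    (A : Matrix m n ℝ) : ℝ :=
  sSup ((fun x => vecNorm (A.mulVec x)) '' {x | vecNorm x = 1})

/-- Smallest eigenvalue of a real symmetric matrix, via the Rayleigh quotient. -/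
noncomputable def eigMin {n : Type*} [Fintype n] (S : Matrix n n ℝ) : ℝ :=
  sInf ((fun x => x ⬝ᵥ S.mulVec x) '' {x | vecNorm x = 1})

section Streaming

variable {N : ℕ} {M : ℕ → ℕ}

/-- `D_k = A_kᵀ A_k + B_{k+1}ᵀ B_{k+1} + λ_k I`. -/
noncomputable def Dmat (A B : ∀ k : ℕ, Matrix (Fin (M k)) (Fin N) ℝ) (lam : ℕ → ℝ)
    (k : ℕ) : Matrix (Fin N) (Fin N) ℝ :=
  (A k)ᵀ * A k + (B (k + 1))ᵀ * B (k + 1) + lam k • 1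

/-- `E_k = A_{k+1}ᵀ B_{k+1}`. -/
noncomputable def Emat (A B : ∀ k : ℕ, Matrix (Fin (M k)) (Fin N) ℝ) (k : ℕ) :
    Matrix (Fin N) (Fin N) ℝ :=
  (A (k + 1))ᵀ * B (k + 1)

/-- `D_k' = A_kᵀ A_k + λ_k I`. -/
noncomputable def Dmat' (A : ∀ k : ℕ, Matrix (Fin (M k)) (Fin N) ℝ) (lam : ℕ → ℝ)
    (k : ℕ) : Matrix (Fin N) (Fin N) ℝ :=
  (A k)ᵀ * A k + lam k • 1

/-- `Q₀ = D₀`, `Q_{k+1} = D_{k+1} − E_k U_k` with `U_k = Q_k⁻¹ E_kᵀ`. -/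
noncomputable def Qmat (A B : ∀ k : ℕ, Matrix (Fin (M k)) (Fin N) ℝ) (lam : ℕ → ℝ) :
    ℕ → Matrix (Fin N) (Fin N) ℝ
  | 0 => Dmat A B lam 0
  | k + 1 => Dmat A B lam (k + 1) - Emat A B k * ((Qmat A B lam k)⁻¹ * (Emat A B k)ᵀ)

/-- `U_k = Q_k⁻¹ E_kᵀ`. -/
noncomputable def Umat (A B : ∀ k : ℕ, Matrix (Fin (M k)) (Fin N) ℝ) (lam : ℕ → ℝ)
    (k : ℕ) : Matrix (Fin N) (Fin N) ℝ :=
  (Qmat A B lam k)⁻¹ * (Emat A B k)ᵀ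

/-- `Q₀' = D₀'`, `Q_k' = D_k' − E_{k−1} U_{k−1}` for `k ≥ 1`. -/
noncomputable def Qmat' (A B : ∀ k : ℕ, Matrix (Fin (M k)) (Fin N) ℝ) (lam : ℕ → ℝ) :
    ℕ → Matrix (Fin N) (Fin N) ℝ
  | 0 => Dmat' A lam 0
  | k + 1 => Dmat' A lam (k + 1) - Emat A B k * Umat A B lam k

/-- `w_k = A_kᵀ y_k + B_{k+1}ᵀ y_{k+1}`. -/
noncomputable def wvec (A B : ∀ k : ℕ, Matrix (Fin (M k)) (Fin N) ℝ)
    (y : ∀ k : ℕ, Fin (M k) → ℝ) (k : ℕ) : Fin N → ℝ :=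
  (A k)ᵀ.mulVec (y k) + (B (k + 1))ᵀ.mulVec (y (k + 1))

/-- `w_k' = A_kᵀ y_k`. -/
noncomputable def wvec' (A : ∀ k : ℕ, Matrix (Fin (M k)) (Fin N) ℝ)
    (y : ∀ k : ℕ, Fin (M k) → ℝ) (k : ℕ) : Fin N → ℝ :=
  (A k)ᵀ.mulVec (y k)

/-- `v₀ = Q₀⁻¹ w₀`, `v_k = Q_k⁻¹ (w_k − E_{k−1} v_{k−1})` for `k ≥ 1`. -/
noncomputable def vvec (A B : ∀ k : ℕ, Matrix (Fin (M k)) (Fin N) ℝ) (lam : ℕ → ℝ)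
    (y : ∀ k : ℕ, Fin (M k) → ℝ) : ℕ → Fin N → ℝ
  | 0 => (Qmat A B lam 0)⁻¹.mulVec (wvec A B y 0)
  | k + 1 => (Qmat A B lam (k + 1))⁻¹.mulVec
      (wvec A B y (k + 1) - (Emat A B k).mulVec (vvec A B lam y k))

/-- `v₀' = Q₀'⁻¹ w₀'`, `v_K' = Q_K'⁻¹ (w_K' − E_{K−1} v_{K−1})` for `K ≥ 1`. -/
noncomputable def vvec' (A B : ∀ k : ℕ, Matrix (Fin (M k)) (Fin N) ℝ) (lam : ℕ → ℝ)
    (y : ∀ k : ℕ, Fin (M k) → ℝ) : ℕ → Fin N → ℝ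
  | 0 => (Qmat' A B lam 0)⁻¹.mulVec (wvec' A y 0)
  | K + 1 => (Qmat' A B lam (K + 1))⁻¹.mulVec
      (wvec' A y (K + 1) - (Emat A B K).mulVec (vvec A B lam y K))

/-- Backward recursion producing the streaming least-squares estimates, indexed by the
lag `l = K − k`: `alphaAux K 0 = v_K'` and `alphaAux K (l+1) = v_{K−l−1} − U_{K−l−1} ·
alphaAux K l`. -/
noncomputable def alphaAux (A B : ∀ k : ℕ, Matrix (Fin (M k)) (Fin N) ℝ) (lam : ℕ → ℝ)
    (y : ∀ k : ℕ, Fin (M k) → ℝ) (K : ℕ) : ℕ → Fin N → ℝ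
  | 0 => vvec' A B lam y K
  | l + 1 => vvec A B lam y (K - (l + 1)) -
      (Umat A B lam (K - (l + 1))).mulVec (alphaAux A B lam y K l)

/-- The streaming least-squares estimate `α_{k|K}` (for `0 ≤ k ≤ K`): it satisfies
`α_{K|K} = v_K'` and `α_{k|K} = v_k − U_k α_{k+1|K}` for `k < K`. -/
noncomputable def alphaEst (A B : ∀ k : ℕ, Matrix (Fin (M k)) (Fin N) ℝ) (lam : ℕ → ℝ)
    (y : ∀ k : ℕ, Fin (M k) → ℝ) (k K : ℕ) : Fin N → ℝ :=
  alphaAux A B lam y K (K - k)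

end Streaming

/-!
If `x ⬝ Q_k x ≥ κ(1−ε)‖x‖²`, the Schur complement `Q_{k+1} = D_{k+1} − E_k Q_k⁻¹ E_kᵀ` satisfies
`x ⬝ Q_{k+1} x ≥ (κ(1−δ) − (κθ)²/(κ(1−ε)))‖x‖² = κ(1−ε)‖x‖²`, because `1 − ε` is the larger root
of `t² − (1−δ)t + θ²`. Hence `‖Q_k⁻¹‖ ≤ (κ(1−ε))⁻¹` for all `k`, while `‖Q_k'⁻¹‖ ≤ (κλ)⁻¹`.
With `G = [A_k; B_{k+1}]` we have `w_k = Gᵀ(y_k, y_{k+1})` and `GᵀG ⪯ D_k ⪯ κ(1+δ)`, so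
`‖w_k‖, ‖w_k'‖ ≤ κ√(1+δ)·M_y`. The forward recursion then keeps `‖v_k‖` below
`C = √(1+δ)·M_y/(1−ε−θ)`, the fixed point of `c ↦ (κ√(1+δ)·M_y + κθc)/(κ(1−ε))`, and one more
step bounds `α_{k|k} = v_k'` and `α_{k|k+1} = v_k − U_k v_{k+1}'`.
-/

open scoped Matrix.Norms.L2Operator

section Euclidean

variable {m n : Type*} [Fintype m] [Fintype n]

lemma vecNorm_eq_norm_toLp (v : n → ℝ) : vecNorm v = ‖WithLp.toLp 2 v‖ := by
  simp [vecNorm, EuclideanSpace.norm_eq]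

lemma vecNorm_nonneg (v : n → ℝ) : 0 ≤ vecNorm v := Real.sqrt_nonneg _

lemma vecNorm_eq_zero {v : n → ℝ} : vecNorm v = 0 ↔ v = 0 := by
  rw [vecNorm_eq_norm_toLp, norm_eq_zero, WithLp.toLp_eq_zero]

lemma vecNorm_smul (c : ℝ) (v : n → ℝ) : vecNorm (c • v) = |c| * vecNorm v := by
  simp only [vecNorm_eq_norm_toLp, WithLp.toLp_smul, norm_smul, Real.norm_eq_abs]

lemma vecNorm_sub_le (u v : n → ℝ) : vecNorm (u - v) ≤ vecNorm u + vecNorm v := by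
  simpa only [vecNorm_eq_norm_toLp, WithLp.toLp_sub] using norm_sub_le _ _

lemma vecNorm_sumElim {p : Type*} [Fintype p] (u : m → ℝ) (v : p → ℝ) :
    vecNorm (Sum.elim u v) = √((∑ i, u i ^ 2) + ∑ i, v i ^ 2) := by
  simp [vecNorm, Fintype.sum_sum_type]

lemma dotProduct_self_eq_vecNorm_sq (v : n → ℝ) : v ⬝ᵥ v = vecNorm v ^ 2 := by
  rw [vecNorm_eq_norm_toLp, ← real_inner_self_eq_norm_sq, EuclideanSpace.inner_toLp_toLp,
    star_trivial]

lemma abs_dotProduct_le_vecNorm_mul_vecNorm (u v : n → ℝ) :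
    |u ⬝ᵥ v| ≤ vecNorm u * vecNorm v := by
  simpa only [vecNorm_eq_norm_toLp, EuclideanSpace.inner_toLp_toLp, star_trivial,
    dotProduct_comm] using abs_real_inner_le_norm (WithLp.toLp 2 u) (WithLp.toLp 2 v)

lemma dotProduct_le_vecNorm_mul_vecNorm (u v : n → ℝ) : u ⬝ᵥ v ≤ vecNorm u * vecNorm v :=
  (le_abs_self _).trans (abs_dotProduct_le_vecNorm_mul_vecNorm u v)

lemma dotProduct_transpose_mul_self_mulVec (G : Matrix m n ℝ) (x : n → ℝ) :
    x ⬝ᵥ (Gᵀ * G) *ᵥ x = vecNorm (G *ᵥ x) ^ 2 := by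
  rw [← mulVec_mulVec, dotProduct_mulVec, vecMul_transpose, dotProduct_self_eq_vecNorm_sq]

variable [DecidableEq n]

lemma vecNorm_mulVec_le (A : Matrix m n ℝ) (x : n → ℝ) :
    vecNorm (A *ᵥ x) ≤ ‖A‖ * vecNorm x := by
  rw [vecNorm_eq_norm_toLp, vecNorm_eq_norm_toLp]
  exact A.l2_opNorm_mulVec (WithLp.toLp 2 x)

lemma l2_opNorm_le_of_vecNorm_mulVec_le {A : Matrix m n ℝ} {c : ℝ} (hc : 0 ≤ c)
    (h : ∀ x, vecNorm (A *ᵥ x) ≤ c * vecNorm x) : ‖A‖ ≤ c := by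
  rw [Matrix.l2_opNorm_def]
  refine ContinuousLinearMap.opNorm_le_bound _ hc fun x => ?_
  have hx := h x.ofLp
  rwa [vecNorm_eq_norm_toLp, vecNorm_eq_norm_toLp] at hx

lemma l2_opNorm_transpose [DecidableEq m] (A : Matrix m n ℝ) : ‖Aᵀ‖ = ‖A‖ := by
  rw [← conjTranspose_eq_transpose_of_trivial, Matrix.l2_opNorm_conjTranspose]

lemma matSpectralNorm_eq_l2_opNorm (A : Matrix m n ℝ) : matSpectralNorm A = ‖A‖ := by
  rw [Matrix.l2_opNorm_def, ← ContinuousLinearMap.sSup_sphere_eq_norm, matSpectralNorm]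
  have hsphere : {x : n → ℝ | vecNorm x = 1} =
      WithLp.ofLp '' Metric.sphere (0 : EuclideanSpace ℝ n) 1 := by
    ext x
    refine ⟨fun hx => ⟨WithLp.toLp 2 x, by simpa [vecNorm_eq_norm_toLp] using hx, rfl⟩, ?_⟩
    rintro ⟨x, hx, rfl⟩
    simpa [vecNorm_eq_norm_toLp] using hx
  simp_rw [hsphere, Set.image_image, vecNorm_eq_norm_toLp]
  rfl

lemma abs_dotProduct_mulVec_le (Q : Matrix n n ℝ) (x : n → ℝ) :
    |x ⬝ᵥ Q *ᵥ x| ≤ ‖Q‖ * vecNorm x ^ 2 := by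
  calc |x ⬝ᵥ Q *ᵥ x| ≤ vecNorm x * (‖Q‖ * vecNorm x) :=
        (abs_dotProduct_le_vecNorm_mul_vecNorm _ _).trans
          (mul_le_mul_of_nonneg_left (vecNorm_mulVec_le Q x) (vecNorm_nonneg x))
    _ = ‖Q‖ * vecNorm x ^ 2 := by ring

lemma abs_dotProduct_mulVec_sub_le (D : Matrix n n ℝ) (a : ℝ) (x : n → ℝ) :
    |x ⬝ᵥ D *ᵥ x - a * vecNorm x ^ 2| ≤ ‖D - a • 1‖ * vecNorm x ^ 2 := by
  convert abs_dotProduct_mulVec_le (D - a • 1) x using 2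
  rw [sub_mulVec, smul_mulVec, one_mulVec, dotProduct_sub, dotProduct_smul, smul_eq_mul,
    dotProduct_self_eq_vecNorm_sq]

lemma mul_vecNorm_sq_le_of_le_eigMin {Q : Matrix n n ℝ} {c : ℝ} (hc : c ≤ eigMin Q)
    (x : n → ℝ) : c * vecNorm x ^ 2 ≤ x ⬝ᵥ Q *ᵥ x := by
  have hbdd : BddBelow ((fun x => x ⬝ᵥ Q *ᵥ x) '' {x | vecNorm x = 1}) := by
    refine ⟨-‖Q‖, ?_⟩
    rintro _ ⟨u, hu, rfl⟩
    have hu' := abs_dotProduct_mulVec_le Q u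
    rw [show vecNorm u = 1 from hu, one_pow, mul_one] at hu'
    exact neg_le_of_abs_le hu'
  rcases (vecNorm_nonneg x).eq_or_lt with hx | hx
  · obtain rfl := vecNorm_eq_zero.1 hx.symm
    simp [vecNorm]
  have hunit : vecNorm ((vecNorm x)⁻¹ • x) = 1 := by
    rw [vecNorm_smul, abs_inv, abs_of_pos hx, inv_mul_cancel₀ hx.ne']
  have h := hc.trans (csInf_le hbdd ⟨_, hunit, rfl⟩)
  simp only [mulVec_smul, dotProduct_smul, smul_dotProduct, smul_eq_mul] at h
  calc c * vecNorm x ^ 2 ≤ (vecNorm x)⁻¹ * ((vecNorm x)⁻¹ * x ⬝ᵥ Q *ᵥ x) * vecNorm x ^ 2 := by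
        gcongr
    _ = x ⬝ᵥ Q *ᵥ x := by field_simp

lemma l2_opNorm_inv_le_of_coercive {Q : Matrix n n ℝ} {c : ℝ} (hc : 0 < c)
    (hQ : ∀ x, c * vecNorm x ^ 2 ≤ x ⬝ᵥ Q *ᵥ x) : ‖Q⁻¹‖ ≤ c⁻¹ := by
  have hdet : IsUnit Q.det := by
    refine isUnit_iff_ne_zero.2 fun h0 => ?_
    obtain ⟨v, hv, hQv⟩ := exists_mulVec_eq_zero_iff.2 h0
    have hvpos : 0 < vecNorm v := (vecNorm_nonneg v).lt_of_ne' (vecNorm_eq_zero.not.2 hv)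
    have := hQ v
    rw [hQv, dotProduct_zero] at this
    nlinarith [mul_pos hc (pow_pos hvpos 2)]
  refine l2_opNorm_le_of_vecNorm_mulVec_le (inv_nonneg.2 hc.le) fun y => ?_
  have hy : Q *ᵥ Q⁻¹ *ᵥ y = y := by rw [mulVec_mulVec, mul_nonsing_inv Q hdet, one_mulVec]
  have h := (hQ (Q⁻¹ *ᵥ y)).trans (dotProduct_le_vecNorm_mul_vecNorm _ _)
  rw [hy] at h
  rw [← div_eq_inv_mul, le_div_iff₀ hc]
  nlinarith [vecNorm_nonneg (Q⁻¹ *ᵥ y), vecNorm_nonneg y]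

lemma l2_opNorm_le_sqrt_of_gram {G : Matrix m n ℝ} {l a : ℝ} (hl : 0 ≤ l)
    (h : ∀ x, x ⬝ᵥ (Gᵀ * G + l • 1) *ᵥ x ≤ a * vecNorm x ^ 2) : ‖G‖ ≤ √a := by
  refine l2_opNorm_le_of_vecNorm_mulVec_le (Real.sqrt_nonneg a) fun x => ?_
  have hsq : vecNorm (G *ᵥ x) ^ 2 ≤ a * vecNorm x ^ 2 := by
    have := h x
    rw [add_mulVec, smul_mulVec, one_mulVec, dotProduct_add, dotProduct_smul, smul_eq_mul,
      dotProduct_transpose_mul_self_mulVec, dotProduct_self_eq_vecNorm_sq] at this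
    nlinarith [sq_nonneg (vecNorm x)]
  calc vecNorm (G *ᵥ x) = √(vecNorm (G *ᵥ x) ^ 2) := (Real.sqrt_sq (vecNorm_nonneg _)).symm
    _ ≤ √(a * vecNorm x ^ 2) := Real.sqrt_le_sqrt hsq
    _ = √a * vecNorm x := by rw [Real.sqrt_mul' a (sq_nonneg _), Real.sqrt_sq (vecNorm_nonneg x)]

lemma schur_complement_coercive [DecidableEq m] {D : Matrix m m ℝ} {E : Matrix m n ℝ}
    {Q : Matrix n n ℝ} {d e c : ℝ} (hc : 0 < c)
    (hD : ∀ x, d * vecNorm x ^ 2 ≤ x ⬝ᵥ D *ᵥ x) (hE : ‖E‖ ≤ e)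
    (hQ : ∀ x, c * vecNorm x ^ 2 ≤ x ⬝ᵥ Q *ᵥ x) (x : m → ℝ) :
    (d - e ^ 2 / c) * vecNorm x ^ 2 ≤ x ⬝ᵥ (D - E * (Q⁻¹ * Eᵀ)) *ᵥ x := by
  set z := Eᵀ *ᵥ x
  have hz : vecNorm z ≤ e * vecNorm x :=
    (vecNorm_mulVec_le _ x).trans (by rw [l2_opNorm_transpose]; gcongr; exact vecNorm_nonneg x)
  have hquad : x ⬝ᵥ (E * (Q⁻¹ * Eᵀ)) *ᵥ x = z ⬝ᵥ Q⁻¹ *ᵥ z := by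
    rw [← mulVec_mulVec, ← mulVec_mulVec, dotProduct_mulVec, ← mulVec_transpose]
  have hinv : z ⬝ᵥ Q⁻¹ *ᵥ z ≤ e ^ 2 / c * vecNorm x ^ 2 :=
    calc z ⬝ᵥ Q⁻¹ *ᵥ z ≤ c⁻¹ * vecNorm z ^ 2 :=
          (le_abs_self _).trans ((abs_dotProduct_mulVec_le _ z).trans
            (by gcongr; exact l2_opNorm_inv_le_of_coercive hc hQ))
      _ ≤ c⁻¹ * (e * vecNorm x) ^ 2 := by gcongr; exact vecNorm_nonneg z
      _ = e ^ 2 / c * vecNorm x ^ 2 := by ring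
  rw [sub_mulVec, dotProduct_sub, hquad]
  linarith [hD x]

lemma vecNorm_inv_mulVec_sub_le [DecidableEq m] (Q : Matrix n n ℝ) (E : Matrix n m ℝ)
    (w : n → ℝ) (v : m → ℝ) :
    vecNorm (Q⁻¹ *ᵥ (w - E *ᵥ v)) ≤ ‖Q⁻¹‖ * (vecNorm w + ‖E‖ * vecNorm v) :=
  (vecNorm_mulVec_le _ _).trans <| mul_le_mul_of_nonneg_left
    ((vecNorm_sub_le _ _).trans (add_le_add le_rfl (vecNorm_mulVec_le E v))) (norm_nonneg _)

end Euclidean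

lemma one_sub_sub_pos_of_eq {δ θ ε : ℝ} (hθ : θ < (1 - δ) / 2)
    (hε : ε = (1 + δ) / 2 - √((1 - δ) ^ 2 / 4 - θ ^ 2)) : 0 < 1 - ε - θ := by
  rw [hε]
  linarith [Real.sqrt_nonneg ((1 - δ) ^ 2 / 4 - θ ^ 2)]

section Streaming

variable {N : ℕ} {M : ℕ → ℕ} (A B : ∀ k : ℕ, Matrix (Fin (M k)) (Fin N) ℝ) (lam : ℕ → ℝ)
  (y : ∀ k : ℕ, Fin (M k) → ℝ)

lemma Dmat_eq_transpose_mul_self_add (k : ℕ) :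
    Dmat A B lam k = (fromRows (A k) (B (k + 1)))ᵀ * fromRows (A k) (B (k + 1)) + lam k • 1 := by
  rw [transpose_fromRows, fromCols_mul_fromRows, Dmat]

lemma wvec_eq_transpose_mulVec (k : ℕ) :
    wvec A B y k = (fromRows (A k) (B (k + 1)))ᵀ *ᵥ Sum.elim (y k) (y (k + 1)) := by
  rw [transpose_fromRows, fromCols_mulVec_sumElim, wvec]

lemma wvec'_eq_transpose_mulVec (k : ℕ) :
    wvec' A y k = (fromRows (A k) (B (k + 1)))ᵀ *ᵥ Sum.elim (y k) 0 := by
  rw [transpose_fromRows, fromCols_mulVec_sumElim, mulVec_zero, add_zero, wvec']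

lemma vecNorm_wvec_le_of_stability {κ δ Y : ℝ} (hlam : ∀ k, 0 ≤ lam k) (hκ : 0 ≤ κ)
    (hD : ∀ k, ‖Dmat A B lam k - κ • 1‖ ≤ κ * δ)
    (hy : ∀ k, √((∑ i, y k i ^ 2) + ∑ i, y (k + 1) i ^ 2) ≤ √κ * Y) (k : ℕ) :
    vecNorm (wvec A B y k) ≤ κ * √(1 + δ) * Y ∧ vecNorm (wvec' A y k) ≤ κ * √(1 + δ) * Y := by
  set G := fromRows (A k) (B (k + 1))
  have hG : ‖Gᵀ‖ ≤ √(κ * (1 + δ)) := by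
    refine (l2_opNorm_transpose G).trans_le (l2_opNorm_le_sqrt_of_gram (hlam k) fun x => ?_)
    rw [← Dmat_eq_transpose_mul_self_add]
    have := (abs_le.1 (abs_dotProduct_mulVec_sub_le (Dmat A B lam k) κ x)).2
    nlinarith [hD k, sq_nonneg (vecNorm x)]
  have hbound : ‖Gᵀ‖ * √((∑ i, y k i ^ 2) + ∑ i, y (k + 1) i ^ 2) ≤ κ * √(1 + δ) * Y := by
    calc _ ≤ √(κ * (1 + δ)) * (√κ * Y) :=
          mul_le_mul hG (hy k) (Real.sqrt_nonneg _) (Real.sqrt_nonneg _)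
      _ = κ * √(1 + δ) * Y := by
          rw [Real.sqrt_mul hκ]
          linear_combination (√(1 + δ) * Y) * Real.mul_self_sqrt hκ
  constructor
  · rw [wvec_eq_transpose_mulVec]
    refine (vecNorm_mulVec_le _ _).trans ?_
    rwa [vecNorm_sumElim]
  · rw [wvec'_eq_transpose_mulVec A B]
    refine (vecNorm_mulVec_le _ _).trans (le_trans ?_ hbound)
    refine mul_le_mul_of_nonneg_left ?_ (norm_nonneg _)
    rw [vecNorm_sumElim]
    exact Real.sqrt_le_sqrt (by simpa using Finset.sum_nonneg fun i _ => sq_nonneg (y (k + 1) i))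

lemma Qmat_coercive {d e c : ℝ} (hc : 0 < c) (hfix : c ≤ d - e ^ 2 / c)
    (hD : ∀ k x, d * vecNorm x ^ 2 ≤ x ⬝ᵥ Dmat A B lam k *ᵥ x)
    (hE : ∀ k, ‖Emat A B k‖ ≤ e) (k : ℕ) (x : Fin N → ℝ) :
    c * vecNorm x ^ 2 ≤ x ⬝ᵥ Qmat A B lam k *ᵥ x := by
  induction k generalizing x with
  | zero =>
    have hcd : c ≤ d := hfix.trans (sub_le_self _ (by positivity))
    exact (mul_le_mul_of_nonneg_right hcd (sq_nonneg _)).trans (hD 0 x)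
  | succ k ih =>
    exact (mul_le_mul_of_nonneg_right hfix (sq_nonneg _)).trans
      (schur_complement_coercive hc (hD (k + 1)) (hE k) ih x)

lemma l2_opNorm_Qmat_inv_le {κ δ θ ε : ℝ} (hκ : 0 < κ) (hθ0 : 0 ≤ θ) (hθ : θ < (1 - δ) / 2)
    (hε : ε = (1 + δ) / 2 - √((1 - δ) ^ 2 / 4 - θ ^ 2))
    (hD : ∀ k, ‖Dmat A B lam k - κ • 1‖ ≤ κ * δ) (hE : ∀ k, ‖Emat A B k‖ ≤ κ * θ) (k : ℕ) :
    ‖(Qmat A B lam k)⁻¹‖ ≤ (κ * (1 - ε))⁻¹ := by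
  have hc : 0 < κ * (1 - ε) := mul_pos hκ (by linarith [one_sub_sub_pos_of_eq hθ hε])
  have hfix : κ * (1 - ε) ≤ κ * (1 - δ) - (κ * θ) ^ 2 / (κ * (1 - ε)) := by
    have hroot := Real.sq_sqrt (show 0 ≤ (1 - δ) ^ 2 / 4 - θ ^ 2 by nlinarith)
    rw [le_sub_iff_add_le, ← le_sub_iff_add_le', div_le_iff₀ hc]
    exact le_of_eq (by rw [hε]; linear_combination κ ^ 2 * hroot)
  have hDlow : ∀ k x, κ * (1 - δ) * vecNorm x ^ 2 ≤ x ⬝ᵥ Dmat A B lam k *ᵥ x := fun k x => by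
    have := (abs_le.1 (abs_dotProduct_mulVec_sub_le (Dmat A B lam k) κ x)).1
    nlinarith [hD k, sq_nonneg (vecNorm x)]
  exact l2_opNorm_inv_le_of_coercive hc (Qmat_coercive A B lam hc hfix hDlow hE k)

lemma vecNorm_vvec_le {q e W C : ℝ} (hq : 0 < q) (hC : 0 ≤ C)
    (hQ : ∀ k, ‖(Qmat A B lam k)⁻¹‖ ≤ q⁻¹) (hE : ∀ k, ‖Emat A B k‖ ≤ e)
    (hw : ∀ k, vecNorm (wvec A B y k) ≤ W) (hWC : W + e * C ≤ q * C) (k : ℕ) :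
    vecNorm (vvec A B lam y k) ≤ C := by
  have he : 0 ≤ e := (norm_nonneg _).trans (hE 0)
  rw [← inv_mul_le_iff₀ hq] at hWC
  induction k with
  | zero =>
    refine (vecNorm_mulVec_le _ _).trans (le_trans ?_ hWC)
    exact mul_le_mul (hQ 0) ((hw 0).trans (le_add_of_nonneg_right (mul_nonneg he hC)))
      (vecNorm_nonneg _) (inv_nonneg.2 hq.le)
  | succ k ih =>
    refine (vecNorm_inv_mulVec_sub_le _ _ _ _).trans (le_trans ?_ hWC)
    exact mul_le_mul (hQ _) (add_le_add (hw _) (mul_le_mul (hE k) ih (vecNorm_nonneg _) he))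
      (add_nonneg (vecNorm_nonneg _) (mul_nonneg (norm_nonneg _) (vecNorm_nonneg _)))
      (inv_nonneg.2 hq.le)

lemma vecNorm_vvec'_le {q' e W C : ℝ} (hQ' : ∀ k, ‖(Qmat' A B lam k)⁻¹‖ ≤ q'⁻¹)
    (hE : ∀ k, ‖Emat A B k‖ ≤ e) (hw' : ∀ k, vecNorm (wvec' A y k) ≤ W)
    (hv : ∀ k, vecNorm (vvec A B lam y k) ≤ C) (k : ℕ) :
    vecNorm (vvec' A B lam y k) ≤ q'⁻¹ * (W + e * C) := by
  have hq' : 0 ≤ q'⁻¹ := (norm_nonneg _).trans (hQ' 0)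
  have he : 0 ≤ e := (norm_nonneg _).trans (hE 0)
  have hC : 0 ≤ C := (vecNorm_nonneg _).trans (hv 0)
  cases k with
  | zero =>
    exact (vecNorm_mulVec_le _ _).trans (mul_le_mul (hQ' 0)
      ((hw' 0).trans (le_add_of_nonneg_right (mul_nonneg he hC))) (vecNorm_nonneg _) hq')
  | succ k =>
    exact (vecNorm_inv_mulVec_sub_le _ _ _ _).trans (mul_le_mul (hQ' _)
      (add_le_add (hw' _) (mul_le_mul (hE k) (hv k) (vecNorm_nonneg _) he))
      (add_nonneg (vecNorm_nonneg _) (mul_nonneg (norm_nonneg _) (vecNorm_nonneg _))) hq')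

lemma alphaEst_self (k : ℕ) : alphaEst A B lam y k k = vvec' A B lam y k := by
  simp [alphaEst, alphaAux]

lemma alphaEst_succ (k : ℕ) :
    alphaEst A B lam y k (k + 1) =
      vvec A B lam y k - Umat A B lam k *ᵥ vvec' A B lam y (k + 1) := by
  simp [alphaEst, alphaAux]

lemma vecNorm_alphaEst_le {q q' e W C : ℝ} (hq : 0 < q) (hC : 0 ≤ C)
    (hQ : ∀ k, ‖(Qmat A B lam k)⁻¹‖ ≤ q⁻¹) (hQ' : ∀ k, ‖(Qmat' A B lam k)⁻¹‖ ≤ q'⁻¹)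
    (hE : ∀ k, ‖Emat A B k‖ ≤ e) (hw : ∀ k, vecNorm (wvec A B y k) ≤ W)
    (hw' : ∀ k, vecNorm (wvec' A y k) ≤ W) (hWC : W + e * C = q * C) (k : ℕ) :
    vecNorm (alphaEst A B lam y k k) ≤ q'⁻¹ * (q * C) ∧
      vecNorm (alphaEst A B lam y k (k + 1)) ≤ (1 + e * q'⁻¹) * C := by
  have hv := vecNorm_vvec_le A B lam y hq hC hQ hE hw hWC.le
  have hv' := vecNorm_vvec'_le A B lam y hQ' hE hw' hv
  rw [hWC] at hv'
  have he : 0 ≤ e := (norm_nonneg _).trans (hE 0)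
  have hU : ‖Umat A B lam k‖ ≤ q⁻¹ * e :=
    (l2_opNorm_mul _ _).trans (mul_le_mul (hQ k) ((l2_opNorm_transpose _).trans_le (hE k))
      (norm_nonneg _) (inv_nonneg.2 hq.le))
  refine ⟨by rw [alphaEst_self]; exact hv' k, ?_⟩
  rw [alphaEst_succ]
  calc _ ≤ C + q⁻¹ * e * (q'⁻¹ * (q * C)) :=
        (vecNorm_sub_le _ _).trans (add_le_add (hv k) ((vecNorm_mulVec_le _ _).trans
          (mul_le_mul hU (hv' _) (vecNorm_nonneg _) (mul_nonneg (inv_nonneg.2 hq.le) he))))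
    _ = (1 + e * q'⁻¹) * C := by field_simp

end Streaming

theorem streaming_estimates_uniform_bound_general
    (N : ℕ) (M : ℕ → ℕ)
    (A B : ∀ k : ℕ, Matrix (Fin (M k)) (Fin N) ℝ)
    (y : ∀ k : ℕ, Fin (M k) → ℝ) (lam : ℕ → ℝ) (hlam : ∀ k, 0 ≤ lam k)
    (κ δ θ lam0 : ℝ) (hκ : 1 ≤ κ)
    (hθ0 : 0 ≤ θ) (hθ : θ < (1 - δ) / 2) (hlam0 : 0 < lam0)
    (hD : ∀ k, matSpectralNorm (Dmat A B lam k - κ • (1 : Matrix (Fin N) (Fin N) ℝ)) ≤ κ * δ)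
    (hE : ∀ k, matSpectralNorm (Emat A B k) ≤ κ * θ)
    (hQ' : ∀ k, κ * lam0 ≤ eigMin (Qmat' A B lam k))
    (ε : ℝ) (hε : ε = (1 + δ) / 2 - Real.sqrt ((1 - δ) ^ 2 / 4 - θ ^ 2))
    (My : ℝ)
    (hbdd : BddAbove (Set.range fun k : ℕ =>
      Real.sqrt ((∑ i, y k i ^ 2) + ∑ i, y (k + 1) i ^ 2) / Real.sqrt κ))
    (hMy : My = sSup (Set.range fun k : ℕ =>
      Real.sqrt ((∑ i, y k i ^ 2) + ∑ i, y (k + 1) i ^ 2) / Real.sqrt κ)) :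
    ∀ k : ℕ,
      vecNorm (alphaEst A B lam y k k) ≤
        lam0⁻¹ * (1 + θ / (1 - ε - θ)) * Real.sqrt (1 + δ) * My ∧
      vecNorm (alphaEst A B lam y k (k + 1)) ≤
        ((1 + lam0⁻¹ * θ) / (1 - ε - θ)) * Real.sqrt (1 + δ) * My := by
  have hκ0 : 0 < κ := by linarith
  have hεθ := one_sub_sub_pos_of_eq hθ hε
  have hD' := fun k => (matSpectralNorm_eq_l2_opNorm _).symm.trans_le (hD k)
  have hE' := fun k => (matSpectralNorm_eq_l2_opNorm _).symm.trans_le (hE k)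
  have hy : ∀ k, √((∑ i, y k i ^ 2) + ∑ i, y (k + 1) i ^ 2) ≤ √κ * My := fun k => by
    rw [← div_le_iff₀' (Real.sqrt_pos.2 hκ0), hMy]
    exact le_csSup hbdd ⟨k, rfl⟩
  have hMy0 : 0 ≤ My :=
    nonneg_of_mul_nonneg_right ((Real.sqrt_nonneg _).trans (hy 0)) (Real.sqrt_pos.2 hκ0)
  have hw := vecNorm_wvec_le_of_stability A B lam y hlam hκ0.le hD' hy
  intro k
  obtain ⟨hdiag, hlag⟩ := vecNorm_alphaEst_le A B lam y (q := κ * (1 - ε)) (q' := κ * lam0)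
    (C := √(1 + δ) * My / (1 - ε - θ)) (mul_pos hκ0 (by linarith)) (by positivity)
    (l2_opNorm_Qmat_inv_le A B lam hκ0 hθ0 hθ hε hD' hE')
    (fun k => l2_opNorm_inv_le_of_coercive (by positivity) (mul_vecNorm_sq_le_of_le_eigMin (hQ' k)))
    hE' (fun k => (hw k).1) (fun k => (hw k).2) (by field_simp; ring) k
  exact ⟨hdiag.trans_eq (by field_simp; ring), hlag.trans_eq (by field_simp)⟩

/-- uniform bounds on the streaming least-squares estimates: under the
stability hypotheses with parameters `κ, δ, θ, λ` and with
`M_y = κ^{−1/2}·sup_k ‖(y_k, y_{k+1})‖₂` finite,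
(i) `‖α_{k|k}‖₂ ≤ λ⁻¹(1 + θ/(1−ε−θ))√(1+δ)·M_y`, and
(ii) `‖α_{k|k+1}‖₂ ≤ ((1 + λ⁻¹θ)/(1−ε−θ))√(1+δ)·M_y`. -/
theorem streaming_estimates_uniform_bound
    (N : ℕ) (hN : 1 ≤ N) (M : ℕ → ℕ)
    (A B : ∀ k : ℕ, Matrix (Fin (M k)) (Fin N) ℝ)
    (y : ∀ k : ℕ, Fin (M k) → ℝ) (lam : ℕ → ℝ) (hlam : ∀ k, 0 ≤ lam k)
    (κ δ θ lam0 : ℝ) (hκ : 1 ≤ κ) (hδ0 : 0 ≤ δ) (hδ1 : δ < 1)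
    (hθ0 : 0 ≤ θ) (hθ : θ < (1 - δ) / 2) (hlam0 : 0 < lam0)
    (hD : ∀ k, matSpectralNorm (Dmat A B lam k - κ • (1 : Matrix (Fin N) (Fin N) ℝ)) ≤ κ * δ)
    (hE : ∀ k, matSpectralNorm (Emat A B k) ≤ κ * θ)
    (hQ' : ∀ k, κ * lam0 ≤ eigMin (Qmat' A B lam k))
    (ε : ℝ) (hε : ε = (1 + δ) / 2 - Real.sqrt ((1 - δ) ^ 2 / 4 - θ ^ 2))
    (My : ℝ)
    (hbdd : BddAbove (Set.range fun k : ℕ =>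
      Real.sqrt ((∑ i, y k i ^ 2) + ∑ i, y (k + 1) i ^ 2) / Real.sqrt κ))
    (hMy : My = sSup (Set.range fun k : ℕ =>
      Real.sqrt ((∑ i, y k i ^ 2) + ∑ i, y (k + 1) i ^ 2) / Real.sqrt κ)) :
    ∀ k : ℕ,
      vecNorm (alphaEst A B lam y k k) ≤
        lam0⁻¹ * (1 + θ / (1 - ε - θ)) * Real.sqrt (1 + δ) * My ∧
      vecNorm (alphaEst A B lam y k (k + 1)) ≤
        ((1 + lam0⁻¹ * θ) / (1 - ε - θ)) * Real.sqrt (1 + δ) * My :=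
  streaming_estimates_uniform_bound_general N M A B y lam hlam κ δ θ lam0 hκ hθ0 hθ hlam0 hD hE hQ'
    ε hε My hbdd hMy
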